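/- arXiv:2401.12833 — 4 statements merged into one kernel-verified Lean document; each statement's English description precedes it below -/
import Mathlib

section
/- For every v ∈ V, the function M_v : V → R is a K-class, i.e., for every edge (i,j) ∈ E the element 1 − e^{α(i,j)} divides M_v(i) − M_v(j) in R. -/
/-!
Because `h(v) + h(v̄) = e_n - e_{n+1}`, the exceptional value of `M_v` at `v̄` is again
`e^{h(v) - h(v̄)}`, so `M_v(l) = e^{h(v) - h(l)}` for every `l`. Then
`M_v(i) - M_v(j) = -e^{h(v) - h(j)} (1 - e^{h(j) - h(i)})`, which is divisible by
`1 - e^{α(i,j)}` for all `i, j`, edges or not.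
-/

noncomputable section

/-- Standard basis vector `e_k` of `ℤ^{n+1}` (1-indexed), with `e 0 = 0`. -/
def ee (n k : ℕ) : Fin (n+1) → ℤ := fun t => if (t : ℕ) + 1 = k then 1 else 0

/-- The function `h : V → ℤ^{n+1}`. -/
def hh (n j : ℕ) : Fin (n+1) → ℤ :=
  if j ≤ n+2 then ee n (j-1) - ee n (n+1) else ee n n - ee n (2*n+2-j)

/-- The Laurent polynomial ring `R = ℤ[y₁^{±1},…,y_{n+1}^{±1}]`. -/
abbrev Rg (n : ℕ) : Type := AddMonoidAlgebra ℤ (Fin (n+1) → ℤ)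

/-- The monomial `e^w`. -/
def ex (n : ℕ) (w : Fin (n+1) → ℤ) : Rg n := AddMonoidAlgebra.single w 1

/-- `ī = 2n+3-i`. -/
def bar (n i : ℕ) : ℕ := 2*n+3 - i

/-- Membership in the vertex set `V = {1,…,2n+2}`. -/
def memV (n i : ℕ) : Prop := 1 ≤ i ∧ i ≤ 2*n+2

/-- The axial function `α(i,j) = h(j) - h(i)`. -/
def axl (n i j : ℕ) : Fin (n+1) → ℤ := hh n j - hh n i

/-- The K-class `M_v`. -/
def Mv (n v : ℕ) (l : ℕ) : Rg n :=
  if l = v then 1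
  else if l = bar n v then ex n (ee n n - ee n (n+1) - (2:ℤ) • hh n (bar n v))
  else ex n (hh n v - hh n l)

/-- The pointwise inverse `M_v⁻¹`. -/
def MvInv (n v : ℕ) (l : ℕ) : Rg n :=
  if l = v then 1
  else if l = bar n v then ex n (-(ee n n - ee n (n+1) - (2:ℤ) • hh n (bar n v)))
  else ex n (hh n l - hh n v)

/-- A subset `P ⊆ V` is admissible if it is nonempty and contains no pair `{i, ī}`. -/
def admissible (n : ℕ) (P : Finset ℕ) : Prop :=
  P.Nonempty ∧ (∀ i ∈ P, memV n i) ∧ (∀ i ∈ P, bar n i ∉ P)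

/-- The vertex set as a finset. -/
def Vfin (n : ℕ) : Finset ℕ := Finset.Icc 1 (2*n+2)

/-- The Thom class `Δ_P`. -/
def Dl (n : ℕ) (P : Finset ℕ) (l : ℕ) : Rg n :=
  if l ∈ P then
    ∏ k ∈ (Vfin n).filter (fun k => k ∉ P ∧ k ≠ bar n l), (1 - ex n (axl n l k))
  else 0

/-- `φ : V → R` is a K-class if `1 - e^{α(i,j)}` divides `φ(i) - φ(j)` for every edge `(i,j)`. -/
def isKClass (n : ℕ) (f : ℕ → Rg n) : Prop :=
  ∀ i j : ℕ, memV n i → memV n j → j ≠ i → j ≠ bar n i →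
    (1 - ex n (axl n i j)) ∣ (f i - f j)

theorem AddMonoidAlgebra.one_sub_single_dvd_single_sub_single {k G : Type*} [CommRing k]
    [AddCommGroup G] (a b c : G) :
    (1 - single (b - a) (1 : k)) ∣ single (c - a) 1 - single (c - b) 1 := by
  refine ⟨-single (c - b) 1, ?_⟩
  rw [sub_mul, one_mul, mul_neg, single_mul_single, one_mul,
    show b - a + (c - b) = c - a by abel]
  ring

lemma hh_add_hh_bar (n v : ℕ) (hv : memV n v) :
    hh n v + hh n (bar n v) = ee n n - ee n (n+1) := by
  obtain ⟨hv₁, hv₂⟩ := hv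
  funext t
  have ht := t.isLt
  simp only [bar]
  simp only [hh, Pi.add_apply, Pi.sub_apply, ite_apply]
  split_ifs <;> simp only [ee] <;> split_ifs <;> omega

lemma Mv_eq_ex (n v : ℕ) (hv : memV n v) : Mv n v = fun l => ex n (hh n v - hh n l) := by
  funext l
  unfold Mv
  split_ifs with hlv hlbar
  · rw [hlv, sub_self, ex, AddMonoidAlgebra.one_def]
  · rw [hlbar, ← hh_add_hh_bar n v hv, two_smul]
    congr 1
    abel
  · rfl

lemma isKClass_ex_sub_hh (n : ℕ) (c : Fin (n+1) → ℤ) :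
    isKClass n (fun l => ex n (c - hh n l)) :=
  fun i j _ _ _ _ => AddMonoidAlgebra.one_sub_single_dvd_single_sub_single (hh n i) (hh n j) c

theorem Mv_isKClass_general (n : ℕ) (v : ℕ) (hv : memV n v) :
    isKClass n (Mv n v) := by
  rw [Mv_eq_ex n v hv]
  exact isKClass_ex_sub_hh n (hh n v)

/-- For every `v ∈ V`, the function `M_v : V → R` is a K-class. -/
theorem Mv_isKClass (n : ℕ) (hn : 1 ≤ n) (v : ℕ) (hv : memV n v) :
    isKClass n (Mv n v) :=
  Mv_isKClass_general n v hv
end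
end

section
/- If c₀, c₁, …, c_n ∈ R and d₂, d₃, …, d_{n+2} ∈ R satisfy Σ_{m=0}^{n} c_m · ∏_{i=1}^{m}(1 − M_i) + Σ_{j=2}^{n+2} d_j · Δ_{{n+j, n+j+1, …, 2n+2}} = 0 as a function V → R (elements of R acting as constant functions, operations pointwise, the empty product being the constant function 1), then c₀ = c₁ = ⋯ = c_n = 0 and d₂ = d₃ = ⋯ = d_{n+2} = 0. -/
noncomputable section

/-!
The system is triangular. At the vertex `m + 1` (`m ≤ n`) every `Δ` vanishes, and so does every
product `∏_{i ≤ m'} (1 - M_i)` with `m' > m`, whose factor `1 - M_{m+1}` is `0` there, while the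
product with `m' = m` has the nonzero factors `1 - e^{h(i) - h(m+1)}`: `h` is injective on `V` and
`R` is a domain. Once the `c_m` vanish, the same happens at the vertex `n + j` for the classes
`Δ_{{n+b,…,2n+2}}`: those with `b > j` vanish there, and the one with `b = j` does not.
-/

theorem eq_zero_of_sum_mul_triangular {R : Type*} [Semiring R] [NoZeroDivisors R]
    (s : Finset ℕ) (a : ℕ → R) (f : ℕ → ℕ → R)
    (hdiag : ∀ j ∈ s, f j j ≠ 0) (hupper : ∀ j ∈ s, ∀ b ∈ s, j < b → f b j = 0)
    (h : ∀ j ∈ s, ∑ b ∈ s, a b * f b j = 0) : ∀ j ∈ s, a j = 0 := by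
  intro j
  induction j using Nat.strong_induction_on with
  | _ j ih =>
    intro hj
    have hsum : ∑ b ∈ s, a b * f b j = a j * f j j := by
      refine Finset.sum_eq_single_of_mem j hj fun b hb hbj => ?_
      rcases lt_or_gt_of_ne hbj with hlt | hgt
      · rw [ih b hlt hb, zero_mul]
      · rw [hupper j hj b hb hgt, mul_zero]
    exact (mul_eq_zero.mp (hsum ▸ h j hj)).resolve_right (hdiag j hj)

theorem AddMonoidAlgebra.one_sub_single_one_ne_zero {R G : Type*} [Ring R] [Nontrivial R]
    [AddZeroClass G] {w : G} (hw : w ≠ 0) : (1 : AddMonoidAlgebra R G) - single w 1 ≠ 0 := by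
  rw [sub_ne_zero, one_def, Ne, single_left_inj one_ne_zero]
  exact hw.symm

theorem ee_inj_of_le (n : ℕ) {a b : ℕ} (ha : a ≤ n + 1) (hb : b ≤ n + 1)
    (h : ee n a = ee n b) : a = b := by
  by_contra hne
  have key := congrFun h (⟨max a b - 1, by omega⟩ : Fin (n + 1))
  simp only [ee] at key
  split_ifs at key <;> omega

theorem hh_ne_hh_of_le_of_lt (n : ℕ) {j k : ℕ} (hj : j ≤ n + 2) (hk : n + 2 < k)
    (hk' : k ≤ 2 * n + 2) : hh n j ≠ hh n k := by
  intro h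
  rw [hh, if_pos hj, hh, if_neg (by omega)] at h
  have h1 := congrFun h ⟨n, by omega⟩
  have h2 := congrFun h ⟨n - 1, by omega⟩
  simp only [Pi.sub_apply, ee] at h1 h2
  split_ifs at h1 h2 <;> omega

theorem hh_inj_of_memV (n : ℕ) {j k : ℕ} (hj : memV n j) (hk : memV n k) (h : hh n j = hh n k) :
    j = k := by
  obtain ⟨hj1, hj2⟩ := hj
  obtain ⟨hk1, hk2⟩ := hk
  by_cases cj : j ≤ n + 2 <;> by_cases ck : k ≤ n + 2
  · rw [hh, if_pos cj, hh, if_pos ck] at h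
    have := ee_inj_of_le n (by omega) (by omega) (sub_left_injective h)
    omega
  · exact absurd h (hh_ne_hh_of_le_of_lt n cj (by omega) hk2)
  · exact absurd h.symm (hh_ne_hh_of_le_of_lt n ck (by omega) hj2)
  · rw [hh, if_neg cj, hh, if_neg ck] at h
    have := ee_inj_of_le n (by omega) (by omega) (sub_right_injective h)
    omega

theorem one_sub_ex_hh_sub_hh_ne_zero (n : ℕ) {j k : ℕ} (hj : memV n j) (hk : memV n k)
    (hne : j ≠ k) : (1 : Rg n) - ex n (hh n j - hh n k) ≠ 0 :=
  AddMonoidAlgebra.one_sub_single_one_ne_zero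
    (sub_ne_zero.mpr fun he => hne (hh_inj_of_memV n hj hk he))

theorem Mv_of_ne (n : ℕ) {v l : ℕ} (hv : l ≠ v) (hbar : l ≠ bar n v) :
    Mv n v l = ex n (hh n v - hh n l) := by
  rw [Mv, if_neg hv, if_neg hbar]

theorem prod_one_sub_Mv_eq_zero (n : ℕ) {l m : ℕ} (hl : 1 ≤ l) (hlm : l ≤ m) :
    ∏ i ∈ Finset.Icc 1 m, (1 - Mv n i l) = 0 :=
  Finset.prod_eq_zero (Finset.mem_Icc.mpr ⟨hl, hlm⟩) (by rw [Mv, if_pos rfl, sub_self])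

theorem prod_one_sub_Mv_succ_ne_zero (n : ℕ) {m : ℕ} (hm : m ≤ n) :
    ∏ i ∈ Finset.Icc 1 m, (1 - Mv n i (m + 1)) ≠ 0 := by
  refine Finset.prod_ne_zero_iff.mpr fun i hi => ?_
  rw [Finset.mem_Icc] at hi
  rw [Mv_of_ne n (by omega) (by rw [bar]; omega)]
  exact one_sub_ex_hh_sub_hh_ne_zero n ⟨by omega, by omega⟩ ⟨by omega, by omega⟩ (by omega)

theorem Dl_of_notMem (n : ℕ) {P : Finset ℕ} {l : ℕ} (hl : l ∉ P) : Dl n P l = 0 := by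
  rw [Dl, if_neg hl]

theorem Dl_self_ne_zero (n : ℕ) {P : Finset ℕ} (hP : ∀ i ∈ P, memV n i) {l : ℕ}
    (hl : l ∈ P) : Dl n P l ≠ 0 := by
  rw [Dl, if_pos hl]
  refine Finset.prod_ne_zero_iff.mpr fun k hk => ?_
  rw [Finset.mem_filter, Vfin, Finset.mem_Icc] at hk
  obtain ⟨hkV, hkP, -⟩ := hk
  exact one_sub_ex_hh_sub_hh_ne_zero n hkV (hP l hl) (ne_of_mem_of_not_mem hl hkP).symm

theorem Dl_Icc_of_lt (n : ℕ) {j l : ℕ} (hl : l < n + j) :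
    Dl n (Finset.Icc (n + j) (2 * n + 2)) l = 0 :=
  Dl_of_notMem n (by rw [Finset.mem_Icc]; omega)

theorem Dl_Icc_self_ne_zero (n : ℕ) {j : ℕ} (hj : 1 ≤ j) (hj' : j ≤ n + 2) :
    Dl n (Finset.Icc (n + j) (2 * n + 2)) (n + j) ≠ 0 :=
  Dl_self_ne_zero n (fun i hi => by rw [Finset.mem_Icc] at hi; exact ⟨by omega, hi.2⟩)
    (Finset.mem_Icc.mpr ⟨le_rfl, by omega⟩)

theorem kclass_decomposition_unique_general (n : ℕ) (c d : ℕ → Rg n)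
    (h : ∀ l, memV n l →
      (∑ m ∈ Finset.range (n+1), c m * ∏ i ∈ Finset.Icc 1 m, (1 - Mv n i l))
        + ∑ j ∈ Finset.Icc 2 (n+2), d j * Dl n (Finset.Icc (n+j) (2*n+2)) l = 0) :
    (∀ m, m ≤ n → c m = 0) ∧ (∀ j, 2 ≤ j → j ≤ n+2 → d j = 0) := by
  have hc : ∀ m ∈ Finset.range (n + 1), c m = 0 := by
    refine eq_zero_of_sum_mul_triangular _ c
      (fun m' m => ∏ i ∈ Finset.Icc 1 m', (1 - Mv n i (m + 1)))
      (fun m hm => prod_one_sub_Mv_succ_ne_zero n (Finset.mem_range_succ_iff.mp hm))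
      (fun m _ m' _ hlt => prod_one_sub_Mv_eq_zero n (by omega) hlt) fun m hm => ?_
    rw [Finset.mem_range] at hm
    have hDl : ∀ j ∈ Finset.Icc 2 (n + 2),
        d j * Dl n (Finset.Icc (n + j) (2 * n + 2)) (m + 1) = 0 := fun j hj => by
      rw [Finset.mem_Icc] at hj
      rw [Dl_Icc_of_lt n (by omega), mul_zero]
    simpa only [Finset.sum_eq_zero hDl, add_zero] using h (m + 1) ⟨by omega, by omega⟩
  have hd : ∀ j ∈ Finset.Icc 2 (n + 2), d j = 0 := by
    refine eq_zero_of_sum_mul_triangular _ d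
      (fun b j => Dl n (Finset.Icc (n + b) (2 * n + 2)) (n + j))
      (fun j hj => by rw [Finset.mem_Icc] at hj; exact Dl_Icc_self_ne_zero n (by omega) hj.2)
      (fun j _ b _ hlt => Dl_Icc_of_lt n (by omega)) fun j hj => ?_
    rw [Finset.mem_Icc] at hj
    have hc0 : ∀ m ∈ Finset.range (n + 1),
        c m * ∏ i ∈ Finset.Icc 1 m, (1 - Mv n i (n + j)) = 0 := fun m hm => by
      rw [hc m hm, zero_mul]
    simpa only [Finset.sum_eq_zero hc0, zero_add] using h (n + j) ⟨by omega, by omega⟩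
  exact ⟨fun m hm => hc m (Finset.mem_range_succ_iff.mpr hm),
    fun j hj hj' => hd j (Finset.mem_Icc.mpr ⟨hj, hj'⟩)⟩

/-- the coefficients in a decomposition
`Σ_{m=0}^{n} c_m ∏_{i=1}^{m}(1-M_i) + Σ_{j=2}^{n+2} d_j Δ_{{n+j,…,2n+2}} = 0`
(as a function `V → R`) all vanish. -/
theorem kclass_decomposition_unique (n : ℕ) (hn : 1 ≤ n) (c d : ℕ → Rg n)
    (h : ∀ l, memV n l →
      (∑ m ∈ Finset.range (n+1), c m * ∏ i ∈ Finset.Icc 1 m, (1 - Mv n i l))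
        + ∑ j ∈ Finset.Icc 2 (n+2), d j * Dl n (Finset.Icc (n+j) (2*n+2)) l = 0) :
    (∀ m, m ≤ n → c m = 0) ∧ (∀ j, 2 ≤ j → j ≤ n+2 → d j = 0) :=
  kclass_decomposition_unique_general n c d h
end
end

section
/- Let S be the subring of the ring of functions V → R (pointwise operations) generated by the set {M_i : 2 ≤ i ≤ n+2} ∪ {M_i⁻¹ : 2 ≤ i ≤ n+2}. Then the evaluation map S → R, φ ↦ φ(1), is a ring isomorphism of S onto R. -/
noncomputable section

/-- The vertex set `V = {1,…,2n+2}` as a type. -/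
def Vt (n : ℕ) : Type := {i : ℕ // memV n i}

/-- `φ : V → R` is a K-class if `1 - e^{α(i,j)}` divides `φ(i) - φ(j)` for every edge. -/
def isKClassV (n : ℕ) (f : Vt n → Rg n) : Prop :=
  ∀ i j : Vt n, j.1 ≠ i.1 → j.1 ≠ bar n i.1 →
    (1 - ex n (axl n i.1 j.1)) ∣ (f i - f j)

/-! Each `M_i` takes monomial values and `M_i(1) = y_{i-1}`. Hence `y_{i-1} ↦ M_i` extends to a
ring homomorphism `ψ : R → (V → R)`, acting at each vertex by a linear map on exponents. Since
`R` is generated as a ring by the `y_k^{±1}`, the image of `ψ` is the subring generated by the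
`M_i^{±1}`, and evaluation at `1` is a left inverse of `ψ`, hence an isomorphism from that image
onto `R`. -/

open AddMonoidAlgebra

theorem RingHom.bijective_comp_subtype_of_leftInverse {R S : Type*} [Ring R] [Ring S]
    {f : R →+* S} {g : S →+* R} (h : Function.LeftInverse g f) {T : Subring S}
    (hT : T = f.range) : Function.Bijective (g.comp T.subtype) := by
  subst hT
  exact (RingEquiv.ofLeftInverse h).symm.bijective

theorem AddMonoidAlgebra.closure_single_one_eq_top {G : Type*} [AddMonoid G] {S : Set G}
    (hS : AddSubmonoid.closure S = ⊤) :
    Subring.closure ((fun g => single g (1 : ℤ)) '' S) = ⊤ := by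
  have hsingle (g : G) : single g (1 : ℤ) ∈ Subring.closure ((fun g => single g 1) '' S) := by
    induction hS ▸ AddSubmonoid.mem_top g using AddSubmonoid.closure_induction with
    | mem g hg => exact Subring.subset_closure ⟨g, hg, rfl⟩
    | zero => exact Subring.one_mem _
    | add a b _ _ ha hb => rw [← mul_one (1 : ℤ), ← single_mul_single]; exact mul_mem ha hb
  refine (Subring.eq_top_iff' _).2 fun x => ?_
  induction x using AddMonoidAlgebra.induction_linear with
  | zero => exact zero_mem _
  | add x y hx hy => exact add_mem hx hy
  | single g r => simpa using zsmul_mem (hsingle g) r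

theorem Pi.addSubmonoid_closure_single_one_eq_top {ι : Type*} [Fintype ι] [DecidableEq ι] :
    AddSubmonoid.closure (Set.range (fun k => Pi.single k (1 : ℤ)) ∪
      -Set.range (fun k => Pi.single k (1 : ℤ)) : Set (ι → ℤ)) = ⊤ := by
  simp_rw [← AddSubgroup.closure_toAddSubmonoid, ← Submodule.span_int_eq_addSubgroupClosure,
    ← Pi.basisFun_apply ℤ ι]
  rw [(Pi.basisFun ℤ ι).span_eq]
  rfl

def mExp (n v l : ℕ) : Fin (n+1) → ℤ :=
  if l = v then 0
  else if l = bar n v then ee n n - ee n (n+1) - (2:ℤ) • hh n (bar n v)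
  else hh n v - hh n l

theorem Mv_eq_ex_s15 (n v l : ℕ) : Mv n v l = ex n (mExp n v l) := by
  unfold Mv mExp
  split_ifs <;> simp [ex, one_def]

theorem MvInv_eq_ex (n v l : ℕ) : MvInv n v l = ex n (-mExp n v l) := by
  unfold MvInv mExp
  split_ifs <;> simp [ex, one_def]

theorem ee_zero (n : ℕ) : ee n 0 = 0 := by
  funext t
  simp [ee]

theorem ee_succ (n : ℕ) (k : Fin (n+1)) : ee n (k + 1) = Pi.single k 1 := by
  funext t
  simp [ee, Pi.single_apply, Fin.ext_iff]

theorem mExp_add_two_one {n : ℕ} (hn : 1 ≤ n) (k : Fin (n+1)) :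
    mExp n ((k : ℕ) + 2) 1 = Pi.single k 1 := by
  have hk := k.isLt
  rw [mExp, if_neg (by omega), if_neg (by unfold bar; omega), hh, hh, if_pos (by omega),
    if_pos le_add_self, show (k : ℕ) + 2 - 1 = k + 1 from rfl, Nat.sub_self, ee_zero, ee_succ]
  abel

def mExpMap (n l : ℕ) : (Fin (n+1) → ℤ) →+ (Fin (n+1) → ℤ) :=
  (Fintype.linearCombination ℤ fun k : Fin (n+1) => mExp n ((k : ℕ) + 2) l).toAddMonoidHom

theorem mExpMap_single (n l : ℕ) (k : Fin (n+1)) :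
    mExpMap n l (Pi.single k 1) = mExp n ((k : ℕ) + 2) l := by
  simp [mExpMap, Fintype.linearCombination_apply_single]

theorem mExpMap_one {n : ℕ} (hn : 1 ≤ n) : mExpMap n 1 = AddMonoidHom.id _ := by
  refine AddMonoidHom.ext fun w => ?_
  simp_rw [mExpMap, LinearMap.toAddMonoidHom_coe, Fintype.linearCombination_apply,
    mExp_add_two_one hn, ← Pi.single_smul, smul_eq_mul, mul_one, Finset.univ_sum_single,
    AddMonoidHom.id_apply]

/-- The ring homomorphism `R → (V → R)` substituting `M_{k+2}` for `y_{k+1}`. -/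
def substM (n : ℕ) : Rg n →+* (Vt n → Rg n) :=
  RingHom.pi fun l => mapDomainRingHom ℤ (mExpMap n l.1)

theorem substM_ex (n : ℕ) (w : Fin (n+1) → ℤ) (l : Vt n) :
    substM n (ex n w) l = ex n (mExpMap n l.1 w) := by
  simp [substM, ex]

theorem leftInverse_eval_one_substM {n : ℕ} (hn : 1 ≤ n) :
    Function.LeftInverse
      (Pi.evalRingHom (fun _ => Rg n) (⟨1, le_rfl, Nat.le_add_left 1 _⟩ : Vt n))
      (substM n) := by
  intro r
  change mapDomainRingHom ℤ (mExpMap n 1) r = r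
  rw [mExpMap_one hn, mapDomainRingHom_id, RingHom.id_apply]

theorem substM_ex_single (n : ℕ) (k : Fin (n+1)) :
    substM n (ex n (Pi.single k 1)) = fun l => Mv n ((k : ℕ) + 2) l.1 := by
  funext l
  rw [substM_ex, mExpMap_single, Mv_eq_ex_s15]

theorem substM_ex_neg_single (n : ℕ) (k : Fin (n+1)) :
    substM n (ex n (-Pi.single k 1)) = fun l => MvInv n ((k : ℕ) + 2) l.1 := by
  funext l
  rw [substM_ex, map_neg, mExpMap_single, MvInv_eq_ex]

def mGenerators (n : ℕ) : Set (Vt n → Rg n) :=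
  {f : Vt n → Rg n | ∃ i : ℕ, 2 ≤ i ∧ i ≤ n+2 ∧
    ((f = fun l => Mv n i l.1) ∨ (f = fun l => MvInv n i l.1))}

theorem image_substM_ex (n : ℕ) :
    (fun w => substM n (ex n w)) '' (Set.range (fun k => Pi.single k 1) ∪
      -Set.range (fun k => Pi.single k 1)) = mGenerators n := by
  ext f
  constructor
  · rintro ⟨w, ⟨k, rfl⟩ | ⟨k, hk⟩, rfl⟩
    · exact ⟨(k : ℕ) + 2, by omega, by omega, .inl (substM_ex_single n k)⟩
    · rw [← neg_neg w, ← hk]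
      exact ⟨(k : ℕ) + 2, by omega, by omega, .inr (substM_ex_neg_single n k)⟩
  · rintro ⟨i, hi2, hin, hf⟩
    obtain ⟨k, rfl⟩ : ∃ k : Fin (n+1), (k : ℕ) + 2 = i :=
      ⟨⟨i - 2, by omega⟩, by simp only; omega⟩
    rcases hf with rfl | rfl
    · exact ⟨_, .inl ⟨k, rfl⟩, substM_ex_single n k⟩
    · exact ⟨_, .inr ⟨k, (neg_neg _).symm⟩, substM_ex_neg_single n k⟩

theorem closure_mGenerators_eq_range (n : ℕ) :
    Subring.closure (mGenerators n) = (substM n).range := by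
  rw [← image_substM_ex, ← Set.image_image (substM n) (ex n), ← RingHom.map_closure,
    RingHom.range_eq_map]
  congr 1
  exact AddMonoidAlgebra.closure_single_one_eq_top Pi.addSubmonoid_closure_single_one_eq_top

/-- the evaluation at the vertex `1 ∈ V` is a ring isomorphism from the
subring of functions `V → R` generated by `{M_i, M_i⁻¹ : 2 ≤ i ≤ n+2}` onto `R`. -/
theorem eval_one_bijective (n : ℕ) (hn : 1 ≤ n) :
    Function.Bijective
      ((Pi.evalRingHom (fun _ : Vt n => Rg n) (⟨1, ⟨le_refl 1, by omega⟩⟩ : Vt n)).comp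
        (Subring.subtype (Subring.closure
          {f : Vt n → Rg n | ∃ i : ℕ, 2 ≤ i ∧ i ≤ n+2 ∧
            ((f = fun l => Mv n i l.1) ∨ (f = fun l => MvInv n i l.1))}))) :=
  RingHom.bijective_comp_subtype_of_leftInverse (leftInverse_eval_one_substM hn)
    (closure_mGenerators_eq_range n)
end
end

section
/- (Surjectivity of φ̃) The range of the ring homomorphism φ̃ : ℤ[𝐌, 𝐃] → (V → R) equals the set K(𝒬_{2n}) of K-classes; in particular, every K-class lies in the subring of functions V → R generated by {M_v, M_v⁻¹ : v ∈ V} ∪ {Δ_P : P admissible}. -/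
noncomputable section

/-- `ī` as a vertex of `V`. -/
def barV (n : ℕ) (v : Vt n) : Vt n :=
  ⟨bar n v.1, by have h := v.2; unfold memV bar at *; omega⟩

/-- The type of formal generators: `𝐌_v` and `𝐌'_v` for `v ∈ V`, and `𝐃_P` for
admissible `P ⊆ V`. -/
def Sig (n : ℕ) : Type := Vt n ⊕ Vt n ⊕ {P : Finset ℕ // admissible n P}

/-- The images of the formal generators: `𝐌_v ↦ M_v`, `𝐌'_v ↦ M_v⁻¹`, `𝐃_P ↦ Δ_P`. -/
def gens (n : ℕ) : Sig n → (Vt n → Rg n)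
  | Sum.inl v => fun l => Mv n v.1 l.1
  | Sum.inr (Sum.inl v) => fun l => MvInv n v.1 l.1
  | Sum.inr (Sum.inr P) => fun l => Dl n P.1 l.1

/-- The ring homomorphism `φ̃ : ℤ[𝐌, 𝐃] → (V → R)`. -/
def phit (n : ℕ) : MvPolynomial (Sig n) ℤ →+* (Vt n → Rg n) :=
  MvPolynomial.eval₂Hom (Int.castRingHom (Vt n → Rg n)) (gens n)

/-!
Each axial vector `α(m,k)`, `k ≠ m`, has a coordinate `±1`. Projecting `ℤ^{n+1}` along `α`
onto the kernel of that coordinate identifies `R / (1 - e^α)` with a Laurent polynomial ring,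
so `1 - e^α` is prime, and `1 - e^α ∣ 1 - e^β` only if `β ∈ ℤα`. Labels of distinct edges at
a vertex `m` are never parallel: `α(m,k') = ±α(m,k)` would force `h k' = h k` or
`2 h m = h k + h k'`, and both are excluded by pairing with the weights `t + 1` and `(t + 1)²`.

K-classes form a subring containing the generators. Conversely, `M_a M_b⁻¹` is the constant
`e^{h a - h b}` and these exponents span `ℤ^{n+1}`, so all constants are generated. If a K-class
`f` vanishes below `m`, then `f(m)` is divisible by the product of the pairwise non-associate
prime labels of the edges from `m` down, and this product is the value at `m` of a generated
class vanishing below `m`: `∏_{k<m} (1 - M_k)` when `m ≤ n + 1`, and `Δ_P` with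
`P = {m, …, 2n+2}` otherwise. Subtracting a multiple of it makes `f` vanish at `m` as well.
-/

namespace AddMonoidAlgebra

variable {R G : Type*} [CommRing R] [AddCommGroup G]

theorem one_sub_single_dvd_one_sub_single_zsmul (a : G) (k : ℤ) :
    (1 - single a (1 : R)) ∣ 1 - single (k • a) 1 := by
  induction k using Int.induction_on with
  | zero => simp [← one_def]
  | succ k ih =>
    have step : 1 - single (((k : ℤ) + 1) • a) (1 : R)
        = (1 - single ((k : ℤ) • a) 1) + single ((k : ℤ) • a) 1 * (1 - single a 1) := by
      rw [mul_sub, mul_one, single_mul_single, mul_one, add_smul, one_smul]; ring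
    rw [step]
    exact dvd_add ih (dvd_mul_left _ _)
  | pred k ih =>
    have step : 1 - single ((-(k : ℤ) - 1) • a) (1 : R)
        = (1 - single (-(k : ℤ) • a) 1) - single ((-(k : ℤ) - 1) • a) 1 * (1 - single a 1) := by
      rw [mul_sub, mul_one, single_mul_single, mul_one, sub_smul, one_smul, sub_add_cancel]; ring
    rw [step]
    exact dvd_sub ih (dvd_mul_left _ _)

theorem one_sub_single_dvd_single_sub_single_s16 (a w : G) (r : R) (k : ℤ) :
    (1 - single a 1) ∣ single w r - single (w + k • a) r := by
  have : single w r - single (w + k • a) r = single w r * (1 - single (k • a) 1) := by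
    rw [mul_sub, mul_one, single_mul_single, mul_one]
  rw [this]
  exact dvd_mul_of_dvd_right (one_sub_single_dvd_one_sub_single_zsmul a k) _

/-- For `l a = 1`, the projection onto `ker l` along `a`. -/
def projAlong (l : G →+ ℤ) (a : G) : G →+ G := AddMonoidHom.id G - (zmultiplesHom G a).comp l

theorem projAlong_apply (l : G →+ ℤ) (a x : G) : projAlong l a x = x - l x • a := rfl

variable {l : G →+ ℤ} {a : G}

theorem one_sub_single_dvd_sub_mapDomainRingHom_projAlong (f : AddMonoidAlgebra R G) :
    (1 - single a 1) ∣ f - mapDomainRingHom R (projAlong l a) f := by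
  induction f using induction_linear with
  | zero => simp
  | add f g hf hg => rw [map_add, add_sub_add_comm]; exact dvd_add hf hg
  | single w r =>
    rw [mapDomainRingHom_apply, mapDomain_single, projAlong_apply, sub_eq_add_neg w, ← neg_smul]
    exact one_sub_single_dvd_single_sub_single_s16 a w r _

theorem ker_mapDomainRingHom_projAlong (ha : l a = 1) :
    RingHom.ker (mapDomainRingHom R (projAlong l a)) = Ideal.span {1 - single a 1} := by
  refine le_antisymm (fun f hf => ?_) ((Ideal.span_singleton_le_iff_mem _).2 ?_)
  · simpa [Ideal.mem_span_singleton, RingHom.mem_ker.1 hf] using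
      one_sub_single_dvd_sub_mapDomainRingHom_projAlong (R := R) (l := l) (a := a) f
  · rw [RingHom.mem_ker, map_sub, map_one, mapDomainRingHom_apply, mapDomain_single,
      projAlong_apply, ha, one_smul, sub_self, ← one_def, sub_self]

theorem prime_one_sub_single [IsDomain R] [UniqueSums G] (ha : l a = 1) :
    Prime (1 - single a (1 : R)) := by
  have hne : (1 : AddMonoidAlgebra R G) - single a 1 ≠ 0 := by
    intro h
    have h0 : a = 0 := single_left_injective (R := R) one_ne_zero <| by
      simpa [one_def] using (sub_eq_zero.1 h).symm
    rw [h0, map_zero] at ha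
    exact zero_ne_one ha
  rw [← Ideal.span_singleton_prime hne, ← ker_mapDomainRingHom_projAlong ha]
  exact RingHom.ker_isPrime _

theorem exists_zsmul_eq_of_one_sub_single_dvd [Nontrivial R] (ha : l a = 1) {b : G}
    (h : (1 - single a (1 : R)) ∣ 1 - single b 1) : ∃ s : ℤ, b = s • a := by
  rw [← Ideal.mem_span_singleton, ← ker_mapDomainRingHom_projAlong ha, RingHom.mem_ker,
    map_sub, map_one, mapDomainRingHom_apply, mapDomain_single, sub_eq_zero, one_def] at h
  have := single_left_injective (R := R) one_ne_zero h
  exact ⟨l b, sub_eq_zero.1 this.symm⟩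

end AddMonoidAlgebra

theorem Finset.prod_dvd_of_prime_of_pairwise_not_dvd {M ι : Type*} [CommMonoidWithZero M]
    [IsCancelMulZero M] {s : Finset ι} {p : ι → M} {x : M} (hp : ∀ i ∈ s, Prime (p i))
    (hs : (s : Set ι).Pairwise fun i j => ¬ p i ∣ p j) (hx : ∀ i ∈ s, p i ∣ x) :
    ∏ i ∈ s, p i ∣ x := by
  classical
  induction s using Finset.induction_on generalizing x with
  | empty => simp
  | insert a s ha ih =>
    obtain ⟨y, rfl⟩ := hx a (mem_insert_self a s)
    rw [prod_insert ha]
    refine mul_dvd_mul_left _ (ih (fun i hi => hp i (mem_insert_of_mem hi))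
      (hs.mono (by simp)) fun i hi => ?_)
    refine ((hp i (mem_insert_of_mem hi)).dvd_or_dvd (hx i (mem_insert_of_mem hi))).resolve_left
      ?_
    exact hs (mem_insert_of_mem hi) (mem_insert_self a s) (ne_of_mem_of_not_mem hi ha)

namespace QuadricGKM

open AddMonoidAlgebra Matrix

variable {n : ℕ}

local notation "𝒮" => Subring.closure (Set.range (gens n))

theorem memV_bar {v : ℕ} (hv : memV n v) : memV n (bar n v) := by
  unfold memV bar at *; omega

theorem bar_bar {v : ℕ} (hv : memV n v) : bar n (bar n v) = v := by
  unfold memV bar at *; omega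

theorem hh_apply (j : ℕ) (t : Fin (n + 1)) :
    hh n j t = if j ≤ n + 2 then (if (t : ℕ) + 2 = j then 1 else 0) - (if (t : ℕ) = n then 1 else 0)
      else (if (t : ℕ) + 1 = n then 1 else 0) - (if (t : ℕ) + 1 + j = 2 * n + 2 then 1 else 0) := by
  have := t.2
  unfold hh ee
  split_ifs <;> simp_all <;> omega

theorem hh_add_hh_bar {v : ℕ} (hv : memV n v) :
    hh n v + hh n (bar n v) = ee n n - ee n (n + 1) := by
  ext t
  have := t.2
  unfold memV at hv
  simp only [Pi.add_apply, Pi.sub_apply, hh_apply, ee, bar]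
  split_ifs <;> omega

theorem hh_sub_hh_one (t : Fin (n + 1)) : hh n ((t : ℕ) + 2) - hh n 1 = Pi.single t 1 := by
  ext u
  have := u.2
  simp only [Pi.sub_apply, hh_apply, Pi.single_apply, Fin.ext_iff]
  split_ifs <;> omega

theorem dotProduct_ee (c : ℕ → ℤ) (k : ℕ) :
    (fun t : Fin (n + 1) => c t) ⬝ᵥ ee n k = if 1 ≤ k ∧ k ≤ n + 1 then c (k - 1) else 0 := by
  split_ifs with hk
  · have : ee n k = Pi.single ⟨k - 1, by omega⟩ 1 := by
      ext t; simp only [ee, Pi.single_apply, Fin.ext_iff]; split_ifs <;> omega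
    rw [this, dotProduct_single, mul_one]
  · have : ee n k = 0 := by
      ext t; have := t.2; simp only [ee, Pi.zero_apply]; split_ifs <;> omega
    rw [this, dotProduct_zero]

theorem dotProduct_hh (hn : 1 ≤ n) (c : ℕ → ℤ) {j : ℕ} (hj : memV n j) :
    (fun t : Fin (n + 1) => c t) ⬝ᵥ hh n j =
      if j ≤ n + 2 then (if 2 ≤ j then c (j - 2) else 0) - c n
      else c (n - 1) - if j ≤ 2 * n + 1 then c (2 * n + 1 - j) else 0 := by
  unfold memV at hj
  unfold hh
  split_ifs <;> simp only [dotProduct_sub, dotProduct_ee] <;> split_ifs <;>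
    first | omega | (congr 2 <;> omega)

theorem hh_apply_last (j : ℕ) : hh n j (Fin.last n) = if j ≤ n + 1 then -1 else 0 := by
  simp only [hh_apply, Fin.val_last]
  split_ifs <;> omega

theorem weight_dotProduct_hh (hn : 1 ≤ n) {j : ℕ} (hj : memV n j) :
    (fun t : Fin (n + 1) => ((t : ℕ) : ℤ) + 1) ⬝ᵥ hh n j = j - (n + 2) := by
  rw [dotProduct_hh hn (fun t => (t : ℤ) + 1) hj]
  unfold memV at hj
  split_ifs <;> omega

theorem sqWeight_dotProduct_hh (hn : 1 ≤ n) {j : ℕ} (hj : memV n j) :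
    (fun t : Fin (n + 1) => (((t : ℕ) : ℤ) + 1) ^ 2) ⬝ᵥ hh n j =
      if j ≤ n + 1 then ((j : ℤ) - 1) ^ 2 - ((n : ℤ) + 1) ^ 2
      else (n : ℤ) ^ 2 - (2 * (n : ℤ) + 2 - j) ^ 2 := by
  rw [dotProduct_hh hn (fun t => ((t : ℤ) + 1) ^ 2) hj]
  unfold memV at hj
  split_ifs with h1 h2 h3 _ h3 <;> try omega
  · push_cast [Nat.cast_sub h2]; ring
  · obtain rfl : j = n + 2 := by omega
    push_cast; ring
  · obtain rfl : j = 1 := by omega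
    ring
  · push_cast [Nat.cast_sub hn, Nat.cast_sub h3]; ring
  · obtain rfl : j = 2 * n + 2 := by omega
    push_cast [Nat.cast_sub hn]; ring

theorem hh_injOn (hn : 1 ≤ n) : Set.InjOn (hh n) {j | memV n j} := by
  intro k hk m hm h
  have := congrArg (fun x => (fun t : Fin (n + 1) => ((t : ℕ) : ℤ) + 1) ⬝ᵥ x) h
  simp only [weight_dotProduct_hh hn hk, weight_dotProduct_hh hn hm] at this
  omega

/- Pairing with `t + 1` gives `k + k' = 2 m`; the last coordinate puts `k, k', m` in the same
half `{1, …, n+1}` or `{n+2, …, 2n+2}`, on which pairing with `(t + 1)²` is a strictly convex,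
resp. concave, function of the vertex. -/
theorem eq_of_hh_add_hh_eq_two_smul (hn : 1 ≤ n) {k k' m : ℕ} (hk : memV n k) (hk' : memV n k')
    (hm : memV n m) (h : hh n k + hh n k' = (2 : ℤ) • hh n m) : k = k' := by
  have hw := congrArg (fun x => (fun t : Fin (n + 1) => ((t : ℕ) : ℤ) + 1) ⬝ᵥ x) h
  have hs := congrArg (fun x => (fun t : Fin (n + 1) => (((t : ℕ) : ℤ) + 1) ^ 2) ⬝ᵥ x) h
  have hl := congrFun h (Fin.last n)
  simp only [dotProduct_add, dotProduct_smul, weight_dotProduct_hh hn hk,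
    weight_dotProduct_hh hn hk', weight_dotProduct_hh hn hm, sqWeight_dotProduct_hh hn hk,
    sqWeight_dotProduct_hh hn hk', sqWeight_dotProduct_hh hn hm, smul_eq_mul] at hw hs
  simp only [Pi.add_apply, Pi.smul_apply, hh_apply_last, smul_eq_mul] at hl
  have key : ∀ x y z : ℤ, x + y = 2 * z → x ^ 2 + y ^ 2 = 2 * z ^ 2 → x = y := fun x y z h1 h2 =>
    sub_eq_zero.1 <| pow_eq_zero_iff two_ne_zero |>.1 <| by
      linear_combination 2 * h2 - (x + y + 2 * z) * h1
  split_ifs at hl hs <;> try omega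
  · have := key (k - 1) (k' - 1) (m - 1) (by omega) (by linarith)
    omega
  · have := key (2 * n + 2 - k) (2 * n + 2 - k') (2 * n + 2 - m) (by omega) (by linarith)
    omega

theorem exists_hh_sub_hh_apply_eq_one (hn : 1 ≤ n) {k m : ℕ} (hk : memV n k) (hm : memV n m)
    (hmk : m < k) : ∃ t, hh n k t - hh n m t = 1 := by
  unfold memV at hk hm
  by_cases hk' : k ≤ n + 1
  · refine ⟨⟨k - 2, by omega⟩, ?_⟩
    simp only [hh_apply]; split_ifs <;> omega
  by_cases hm' : m ≤ n + 1
  · refine ⟨Fin.last n, ?_⟩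
    simp [hh_apply_last, hk', hm']
  · refine ⟨⟨2 * n + 1 - m, by omega⟩, ?_⟩
    simp only [hh_apply]; split_ifs <;> omega

theorem ex_add (w w' : Fin (n + 1) → ℤ) : ex n (w + w') = ex n w * ex n w' := by
  simp [ex, single_mul_single]

theorem ex_sum {ι : Type*} (s : Finset ι) (f : ι → Fin (n + 1) → ℤ) :
    ex n (∑ i ∈ s, f i) = ∏ i ∈ s, ex n (f i) := by
  simp [ex, prod_single]

theorem prime_one_sub_ex {a : Fin (n + 1) → ℤ} {t : Fin (n + 1)} (ht : IsUnit (a t)) :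
    Prime (1 - ex n a) :=
  prime_one_sub_single (l := a t • Pi.evalAddMonoidHom _ t) (by simpa using Int.isUnit_mul_self ht)

theorem exists_zsmul_eq_of_one_sub_ex_dvd {a b : Fin (n + 1) → ℤ} {t : Fin (n + 1)}
    (ht : IsUnit (a t)) (h : (1 - ex n a) ∣ 1 - ex n b) : ∃ s : ℤ, b = s • a :=
  exists_zsmul_eq_of_one_sub_single_dvd (l := a t • Pi.evalAddMonoidHom _ t)
    (by simpa using Int.isUnit_mul_self ht) h

theorem exists_isUnit_axl_apply (hn : 1 ≤ n) {m k : ℕ} (hm : memV n m) (hk : memV n k)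
    (hkm : k ≠ m) : ∃ t, IsUnit (axl n m k t) := by
  rcases hkm.lt_or_gt with h | h
  · obtain ⟨t, ht⟩ := exists_hh_sub_hh_apply_eq_one hn hm hk h
    exact ⟨t, by rw [axl, Pi.sub_apply, ← neg_sub, ht]; exact isUnit_one.neg⟩
  · obtain ⟨t, ht⟩ := exists_hh_sub_hh_apply_eq_one hn hk hm h
    exact ⟨t, by rw [axl, Pi.sub_apply, ht]; exact isUnit_one⟩

theorem prime_one_sub_ex_axl (hn : 1 ≤ n) {m k : ℕ} (hm : memV n m) (hk : memV n k)
    (hkm : k ≠ m) : Prime (1 - ex n (axl n m k)) :=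
  (exists_isUnit_axl_apply hn hm hk hkm).elim fun _ => prime_one_sub_ex

theorem not_one_sub_ex_axl_dvd (hn : 1 ≤ n) {m k k' : ℕ} (hm : memV n m) (hk : memV n k)
    (hk' : memV n k') (hkm : k ≠ m) (hk'm : k' ≠ m) (hkk' : k ≠ k') :
    ¬ (1 - ex n (axl n m k)) ∣ 1 - ex n (axl n m k') := by
  intro hdvd
  obtain ⟨t, ht⟩ := exists_isUnit_axl_apply hn hm hk hkm
  obtain ⟨s, hs⟩ := exists_zsmul_eq_of_one_sub_ex_dvd ht hdvd
  obtain ⟨u, hu⟩ := exists_isUnit_axl_apply hn hm hk' hk'm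
  have hsu : IsUnit s := by
    rw [hs, Pi.smul_apply, smul_eq_mul] at hu
    exact isUnit_of_mul_isUnit_left hu
  unfold axl at hs
  rcases Int.isUnit_iff.1 hsu with rfl | rfl
  · exact hkk' (hh_injOn hn hk hk' (by simpa using hs.symm))
  · refine hkk' (eq_of_hh_add_hh_eq_two_smul hn hk hk' hm ?_)
    rw [neg_one_smul] at hs
    rw [two_smul]
    linear_combination hs

theorem Mv_eq {v : ℕ} (hv : memV n v) (l : ℕ) : Mv n v l = ex n (hh n v - hh n l) := by
  unfold Mv
  split_ifs with h1 h2
  · rw [h1, sub_self]; rfl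
  · rw [h2, ← hh_add_hh_bar hv]
    congr 1
    module
  · rfl

theorem MvInv_eq {v : ℕ} (hv : memV n v) (l : ℕ) : MvInv n v l = ex n (hh n l - hh n v) := by
  unfold MvInv
  split_ifs with h1 h2
  · rw [h1, sub_self]; rfl
  · rw [h2, ← hh_add_hh_bar hv]
    congr 1
    module
  · rfl

theorem axl_bar_eq_axl_bar {i j : ℕ} (hi : memV n i) (hj : memV n j) :
    axl n i (bar n j) = axl n j (bar n i) := by
  unfold axl
  rw [sub_eq_sub_iff_add_eq_add, add_comm (hh n (bar n j)), hh_add_hh_bar hj,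
    add_comm (hh n (bar n i)), hh_add_hh_bar hi]

def kClasses (n : ℕ) : Subring (Vt n → Rg n) where
  carrier := {f | isKClassV n f}
  mul_mem' {f g} hf hg i j hji hjbi := by
    have : (f * g) i - (f * g) j = f i * (g i - g j) + (f i - f j) * g j := by
      simp only [Pi.mul_apply]; ring
    rw [this]
    exact dvd_add ((hg i j hji hjbi).mul_left _) ((hf i j hji hjbi).mul_right _)
  one_mem' i j _ _ := by simp
  add_mem' hf hg i j hji hjbi := by
    simpa only [Pi.add_apply, add_sub_add_comm] using dvd_add (hf i j hji hjbi) (hg i j hji hjbi)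
  zero_mem' i j _ _ := by simp
  neg_mem' hf i j hji hjbi := by
    simpa only [Pi.neg_apply, neg_sub_neg, neg_sub] using (hf i j hji hjbi).neg_right

theorem isKClassV_ex_add_zsmul_hh (c : Fin (n + 1) → ℤ) (s : ℤ) :
    isKClassV n fun l => ex n (c + s • hh n l.1) := by
  intro i j _ _
  beta_reduce
  have : c + s • hh n j.1 = (c + s • hh n i.1) + s • axl n i.1 j.1 := by
    rw [axl, smul_sub]; abel
  rw [this]
  exact one_sub_single_dvd_single_sub_single_s16 _ _ _ _

theorem Dl_of_mem {P : Finset ℕ} {l : ℕ} (hl : l ∈ P) :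
    Dl n P l = ∏ k ∈ ((Vfin n).filter (· ∉ P)).erase (bar n l), (1 - ex n (axl n l k)) := by
  rw [Dl, if_pos hl]
  congr 1
  ext k
  simp [and_comm, and_assoc]

theorem isKClassV_Dl {P : Finset ℕ} (hP : admissible n P) : isKClassV n fun l => Dl n P l.1 := by
  intro i j hji hjbi
  obtain ⟨-, -, hbar⟩ := hP
  have hS {k : ℕ} (hk : memV n k) (hkP : k ∉ P) : k ∈ (Vfin n).filter (· ∉ P) :=
    Finset.mem_filter.2 ⟨Finset.mem_Icc.2 hk, hkP⟩
  by_cases hi : i.1 ∈ P <;> by_cases hj : j.1 ∈ P <;> dsimp only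
  · have hbij : bar n i.1 ≠ bar n j.1 := fun h => hji (by rw [← bar_bar i.2, h, bar_bar j.2])
    rw [Dl_of_mem hi, Dl_of_mem hj,
      ← Finset.mul_prod_erase _ _ (Finset.mem_erase.2 ⟨hbij.symm, hS (memV_bar j.2) (hbar _ hj)⟩),
      ← Finset.mul_prod_erase _ _ (Finset.mem_erase.2 ⟨hbij, hS (memV_bar i.2) (hbar _ hi)⟩),
      Finset.erase_right_comm, axl_bar_eq_axl_bar i.2 j.2, ← mul_sub]
    refine dvd_mul_of_dvd_right ?_ _
    -- the remaining factors agree modulo `1 - e^{α(i,j)}`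
    rw [← Ideal.mem_span_singleton, ← Ideal.Quotient.eq, map_prod, map_prod]
    refine Finset.prod_congr rfl fun k _ => Ideal.Quotient.eq.2 (Ideal.mem_span_singleton.2 ?_)
    have : axl n i.1 k = axl n j.1 k + (1 : ℤ) • axl n i.1 j.1 := by
      rw [axl, axl, axl, one_smul]; abel
    rw [sub_sub_sub_cancel_left, this]
    exact one_sub_single_dvd_single_sub_single_s16 _ _ _ _
  · rw [Dl_of_mem hi, Dl, if_neg hj, sub_zero]
    exact Finset.dvd_prod_of_mem _ (Finset.mem_erase.2 ⟨hjbi, hS j.2 hj⟩)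
  · rw [Dl, if_neg hi, Dl_of_mem hj, zero_sub, dvd_neg]
    have hij : i.1 ≠ bar n j.1 := fun h => hjbi (by rw [h, bar_bar j.2])
    refine dvd_trans ?_ (Finset.dvd_prod_of_mem _ (Finset.mem_erase.2 ⟨hij, hS i.2 hi⟩))
    have : axl n j.1 i.1 = (-1 : ℤ) • axl n i.1 j.1 := by rw [axl, axl, neg_one_smul, neg_sub]
    rw [this]
    exact one_sub_single_dvd_one_sub_single_zsmul _ _
  · simp [Dl, hi, hj]

theorem gens_mem_kClasses (s : Sig n) : gens n s ∈ kClasses n := by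
  rcases s with v | v | ⟨P, hP⟩
  · have : gens n (.inl v) = fun l => ex n (hh n v.1 + (-1 : ℤ) • hh n l.1) := by
      ext1 l; simp only [gens]; rw [Mv_eq v.2, neg_one_smul, ← sub_eq_add_neg]
    rw [this]
    exact isKClassV_ex_add_zsmul_hh _ _
  · have : gens n (.inr (.inl v)) = fun l => ex n (-hh n v.1 + (1 : ℤ) • hh n l.1) := by
      ext1 l; simp only [gens]; rw [MvInv_eq v.2, one_smul, neg_add_eq_sub]
    rw [this]
    exact isKClassV_ex_add_zsmul_hh _ _
  · exact isKClassV_Dl hP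

theorem gens_eq_phit_X (s : Sig n) : gens n s = phit n (MvPolynomial.X s) := by
  simp [phit]

theorem range_phit_eq_closure : Set.range (phit n) = 𝒮 := by
  refine Set.Subset.antisymm ?_ (Subring.closure_le (t := (phit n).range).2 ?_)
  · rintro _ ⟨p, rfl⟩
    induction p using MvPolynomial.induction_on with
    | C a => simp [phit]
    | add p q hp hq => rw [map_add]; exact add_mem hp hq
    | mul_X p s hp =>
      rw [map_mul, ← gens_eq_phit_X]
      exact mul_mem hp (Subring.subset_closure ⟨s, rfl⟩)
  · rintro _ ⟨s, rfl⟩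
    exact ⟨MvPolynomial.X s, (gens_eq_phit_X s).symm⟩

theorem closure_le_kClasses : 𝒮 ≤ kClasses n :=
  Subring.closure_le.2 (Set.range_subset_iff.2 gens_mem_kClasses)

theorem const_ex_zsmul_hh_sub_hh_mem (a b : Vt n) (z : ℤ) :
    (fun _ : Vt n => ex n (z • (hh n a.1 - hh n b.1))) ∈ 𝒮 := by
  have hpow (a b : Vt n) (s : ℕ) : (fun _ : Vt n => ex n ((s : ℤ) • (hh n a.1 - hh n b.1))) =
      (gens n (.inl a) * gens n (.inr (.inl b))) ^ s := by
    ext1 l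
    simp only [gens, Pi.pow_apply, Pi.mul_apply, Mv_eq a.2, MvInv_eq b.2, ← ex_add]
    rw [ex, ex, single_pow, one_pow, natCast_zsmul]
    congr 2
    abel
  have hmem (a b : Vt n) : gens n (.inl a) * gens n (.inr (.inl b)) ∈ 𝒮 :=
    mul_mem (Subring.subset_closure (Set.mem_range_self _))
      (Subring.subset_closure (Set.mem_range_self _))
  obtain ⟨s, rfl | rfl⟩ := Int.eq_nat_or_neg z
  · rw [hpow]; exact pow_mem (hmem a b) s
  · rw [neg_smul, ← smul_neg, neg_sub, hpow]; exact pow_mem (hmem b a) s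

theorem const_ex_mem (w : Fin (n + 1) → ℤ) : (fun _ : Vt n => ex n w) ∈ 𝒮 := by
  have hw : w = ∑ t, w t • (hh n ((t : ℕ) + 2) - hh n 1) := by
    simp_rw [hh_sub_hh_one, ← Pi.single_smul', smul_eq_mul, mul_one, Finset.univ_sum_single]
  have : (fun _ : Vt n => ex n w) =
      ∏ t, fun _ : Vt n => ex n (w t • (hh n ((t : ℕ) + 2) - hh n 1)) := by
    ext1 l
    rw [Finset.prod_apply, ← ex_sum, ← hw]
  rw [this]
  refine Subring.prod_mem _ fun t _ => ?_
  exact const_ex_zsmul_hh_sub_hh_mem ⟨(t : ℕ) + 2, by unfold memV; omega⟩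
    ⟨1, by unfold memV; omega⟩ _

theorem const_mem (c : Rg n) : (fun _ : Vt n => c) ∈ 𝒮 := by
  induction c using induction_linear with
  | zero => exact zero_mem _
  | add x y hx hy => exact add_mem hx hy
  | single w r =>
    have : (fun _ : Vt n => single w r) = r • fun _ : Vt n => ex n w := by
      ext1 l; rw [Pi.smul_apply, ex, smul_single', mul_one]
    rw [this]
    exact zsmul_mem (const_ex_mem w) r

def lowerNeighbors (n m : ℕ) : Finset ℕ := (Vfin n).filter fun k => k < m ∧ k ≠ bar n m

theorem memV_of_mem_lowerNeighbors {m k : ℕ} (hk : k ∈ lowerNeighbors n m) : memV n k :=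
  Finset.mem_Icc.1 (Finset.mem_filter.1 hk).1

theorem exists_mem_closure_vanishing_below (v : Vt n) :
    ∃ g ∈ 𝒮, (∀ l : Vt n, l.1 < v.1 → g l = 0) ∧
      g v = ∏ k ∈ lowerNeighbors n v.1, (1 - ex n (axl n v.1 k)) := by
  have hv := v.2
  unfold memV at hv
  by_cases hvn : v.1 ≤ n + 1
  · refine ⟨∏ k ∈ lowerNeighbors n v.1, (1 - fun l : Vt n => Mv n k l.1),
      Subring.prod_mem _ fun k hk => sub_mem (one_mem _)
        (Subring.subset_closure ⟨.inl ⟨k, memV_of_mem_lowerNeighbors hk⟩, rfl⟩),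
      fun l hl => ?_, ?_⟩ <;> rw [Finset.prod_apply]
    · have hl' : l.1 ∈ lowerNeighbors n v.1 :=
        Finset.mem_filter.2 ⟨Finset.mem_Icc.2 l.2, hl, by unfold bar; omega⟩
      exact Finset.prod_eq_zero hl' (by simp [Mv])
    · refine Finset.prod_congr rfl fun k hk => ?_
      rw [Pi.sub_apply, Pi.one_apply, Mv_eq (memV_of_mem_lowerNeighbors hk)]
      rfl
  · have hP : admissible n (Finset.Icc v.1 (2 * n + 2)) := by
      refine ⟨⟨v.1, Finset.mem_Icc.2 ⟨le_rfl, hv.2⟩⟩, fun i hi => ?_, fun i hi => ?_⟩ <;>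
        simp only [Finset.mem_Icc, memV, bar] at * <;> omega
    refine ⟨gens n (.inr (.inr ⟨_, hP⟩)), Subring.subset_closure (Set.mem_range_self _),
      fun l hl => ?_, ?_⟩
    · simp only [gens, Dl, Finset.mem_Icc]
      exact if_neg (by omega)
    · simp only [gens, Dl, if_pos (Finset.mem_Icc.2 ⟨le_rfl, hv.2⟩)]
      refine Finset.prod_congr (Finset.filter_congr fun k hk => ?_) fun _ _ => rfl
      rw [Vfin, Finset.mem_Icc] at hk
      rw [Finset.mem_Icc]
      omega

theorem prod_lowerNeighbors_dvd (hn : 1 ≤ n) {f : Vt n → Rg n} (hf : isKClassV n f) (v : Vt n)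
    (hvan : ∀ l : Vt n, l.1 < v.1 → f l = 0) :
    ∏ k ∈ lowerNeighbors n v.1, (1 - ex n (axl n v.1 k)) ∣ f v := by
  have hmem {k : ℕ} (hk : k ∈ lowerNeighbors n v.1) : memV n k ∧ k < v.1 ∧ k ≠ bar n v.1 :=
    ⟨memV_of_mem_lowerNeighbors hk, (Finset.mem_filter.1 hk).2⟩
  refine Finset.prod_dvd_of_prime_of_pairwise_not_dvd (fun k hk => ?_)
    (fun k hk k' hk' hkk' => ?_) fun k hk => ?_
  · exact prime_one_sub_ex_axl hn v.2 (hmem hk).1 (hmem hk).2.1.ne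
  · exact not_one_sub_ex_axl_dvd hn v.2 (hmem hk).1 (hmem hk').1 (hmem hk).2.1.ne
      (hmem hk').2.1.ne hkk'
  · have := hf v ⟨k, (hmem hk).1⟩ (hmem hk).2.1.ne (hmem hk).2.2
    rwa [hvan ⟨k, (hmem hk).1⟩ (hmem hk).2.1, sub_zero] at this

theorem mem_closure_of_vanishing_below (hn : 1 ≤ n) {m : ℕ} (hm : m ≤ 2 * n + 3)
    {f : Vt n → Rg n} (hf : isKClassV n f) (hvan : ∀ l : Vt n, l.1 < m → f l = 0) : f ∈ 𝒮 := by
  induction hm using Nat.decreasingInduction generalizing f with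
  | self =>
    have : f = 0 := funext fun l => hvan l (by have := l.2.2; omega)
    rw [this]
    exact zero_mem _
  | of_succ m hm ih =>
    by_cases hm0 : m = 0
    · exact ih hf fun l _ => absurd l.2.1 (by omega)
    obtain ⟨v, rfl⟩ : ∃ v : Vt n, v.1 = m := ⟨⟨m, by unfold memV; omega⟩, rfl⟩
    obtain ⟨c, hc⟩ := prod_lowerNeighbors_dvd hn hf v hvan
    obtain ⟨g, hg, hgvan, hgv⟩ := exists_mem_closure_vanishing_below v
    have hgc : g * (fun _ => c) ∈ 𝒮 := mul_mem hg (const_mem c)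
    have hrest : f - g * (fun _ => c) ∈ 𝒮 := by
      refine ih ((kClasses n).sub_mem hf (closure_le_kClasses hgc)) fun l hl => ?_
      rw [Pi.sub_apply, Pi.mul_apply]
      rcases (Nat.lt_succ_iff.1 hl).lt_or_eq with hl | hl
      · rw [hvan l hl, hgvan l hl, zero_mul, sub_zero]
      · rw [Subtype.ext hl, hgv, hc, sub_self]
    simpa using add_mem hrest hgc

end QuadricGKM

/-- Surjectivity of `φ̃`: the range of `φ̃ : ℤ[𝐌,𝐃] → (V → R)` equals
the set of K-classes. -/
theorem range_phit (n : ℕ) (hn : 1 ≤ n) :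
    Set.range ⇑(phit n) = {f : Vt n → Rg n | isKClassV n f} := by
  rw [QuadricGKM.range_phit_eq_closure]
  exact Set.Subset.antisymm QuadricGKM.closure_le_kClasses fun f hf =>
    QuadricGKM.mem_closure_of_vanishing_below hn (Nat.zero_le _) hf fun l hl =>
      absurd hl (Nat.not_lt_zero _)
end
end
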